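/- Let k° be a height-one valuation ring with fraction field k, S = Spec(k°), η = Spec(k). The class of τ-coverings—η-étale S-morphisms f : Y → X of admissible (flat, finite-type) S-schemes such that every admissible valuation α : Spec(R) → X with algebraically closed Frac(R) lifts to Y—is stable under composition and under strict base change (W ↦ (Y ×_X W)^st along admissible W → X), and hence forms a Grothendieck (pre)topology on admissible S-schemes. -/

import Mathlib

open AlgebraicGeometry CategoryTheory CategoryTheory.Limits
open scoped NNReal

universe u

noncomputable section

namespace Altered

variable {k : Type u} [Field k] (v : Valuation k ℝ≥0)

/-- S = Spec k°. -/
abbrev BaseS : Scheme.{u} := Spec (CommRingCat.of v.integer)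

/-- The open immersion η = Spec k → S. -/
abbrev genPtTo : Spec (CommRingCat.of k) ⟶ BaseS v :=
  Spec.map (CommRingCat.ofHom (algebraMap v.integer k))

/-- A morphism of schemes is flat if all the induced maps of stalks are flat. -/
def SchemeFlat {X Y : Scheme.{u}} (f : X ⟶ Y) : Prop := ∀ x, (f.stalkMap x).hom.Flat

/-- An S-scheme is admissible if it is flat and of finite type over S. -/
structure AdmissibleOver {X : Scheme.{u}} (sX : X ⟶ BaseS v) : Prop where
  flat : SchemeFlat sX
  locallyOfFiniteType : LocallyOfFiniteType sX
  quasiCompact : QuasiCompact sX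

/-- The generic fiber X_η = X ×_S η of an S-scheme. -/
abbrev genFib {X : Scheme.{u}} (sX : X ⟶ BaseS v) : Scheme.{u} :=
  pullback sX (genPtTo v)

/-- The projection X_η → X. -/
abbrev genFibTo {X : Scheme.{u}} (sX : X ⟶ BaseS v) : genFib v sX ⟶ X :=
  pullback.fst sX (genPtTo v)

/-- f : Y → X is an η-isomorphism: its base change to the generic fiber
Y ×_X X_η → X_η is an isomorphism. -/
def IsEtaIso {X Y : Scheme.{u}} (sX : X ⟶ BaseS v) (f : Y ⟶ X) : Prop :=
  IsIso (pullback.snd f (genFibTo v sX))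

/-- f : Y → X is η-étale: its base change Y ×_X X_η → X_η is étale. -/
def IsEtaEtale {X Y : Scheme.{u}} (sX : X ⟶ BaseS v) (f : Y ⟶ X) : Prop :=
  IsEtale (pullback.snd f (genFibTo v sX))

/-- α : Spec R → X (R a valuation ring) is an admissible valuation: it takes the
generic point of Spec R into the generic fiber X_η. -/
def IsAdmVal {X : Scheme.{u}} (sX : X ⟶ BaseS v)
    {R : Type u} [CommRing R] [IsDomain R] [ValuationRing R]
    (α : Spec (CommRingCat.of R) ⟶ X) : Prop :=
  ∃ γ : Spec (CommRingCat.of (FractionRing R)) ⟶ genFib v sX,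
    γ ≫ genFibTo v sX =
      Spec.map (CommRingCat.ofHom (algebraMap R (FractionRing R))) ≫ α

/-- f : Y → X is a τ-covering (a covering for the η-étale S-admissible topology):
it is an η-étale S-morphism and every admissible valuation of X with algebraically
closed fraction field lifts to an admissible valuation of Y. -/
structure IsTauCovering {X Y : Scheme.{u}} (sX : X ⟶ BaseS v) (sY : Y ⟶ BaseS v)
    (f : Y ⟶ X) : Prop where
  over' : f ≫ sX = sY
  etaEtale : IsEtaEtale v sX f
  lifts : ∀ (R : Type u) [CommRing R] [IsDomain R] [ValuationRing R],
    IsAlgClosed (FractionRing R) →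
    ∀ α : Spec (CommRingCat.of R) ⟶ X, IsAdmVal v sX α →
      ∃ β : Spec (CommRingCat.of R) ⟶ Y, β ≫ f = α ∧ IsAdmVal v sY β

end Altered

/-!
An η-property of a morphism is a property of its base change to the generic fibre, and any map
into `X` whose composite to `S` factors through `η` factors through `X_η`; so η-étaleness is
stable under composition and base change, and an η-isomorphism is η-étale. For the lifting
condition, admissibility of a valuation `α` only depends on `α ≫ sX`. Along the ordinary base
change an admissible valuation of `W` lifts through `Y ×_X W` by the universal property, and it
lifts further through the strict transform `Z ⟶ Y ×_X W` by the valuative criterion for the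
closed immersion, since its generic point already lies in `Z_η ≅ (Y ×_X W)_η`. Strict base
change is therefore the composite of two τ-coverings.
-/

namespace Altered

open MorphismProperty

section Pullbacks

variable {A B C D : Scheme.{u}} (P : MorphismProperty Scheme.{u})

lemma pullback_snd_comp_right [P.IsStableUnderBaseChange] {f : A ⟶ B} {h : C ⟶ B}
    (H : P (pullback.snd f h)) (ψ : D ⟶ C) : P (pullback.snd f (ψ ≫ h)) := by
  rw [← pullbackLeftPullbackSndIso_inv_snd_snd f h ψ, P.cancel_left_of_respectsIso]
  exact P.pullback_snd _ _ H

lemma pullback_snd_pullback_snd [P.RespectsIso] {f : A ⟶ B} {w : C ⟶ B} {h : D ⟶ C}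
    (H : P (pullback.snd f (h ≫ w))) : P (pullback.snd (pullback.snd f w) h) := by
  rwa [← pullbackLeftPullbackSndIso_hom_snd f w h, P.cancel_left_of_respectsIso]

lemma pullback_snd_comp_left [P.RespectsIso] [P.IsMultiplicative] {f : A ⟶ B}
    {h : C ⟶ B} {g : D ⟶ A} (Hf : P (pullback.snd f h))
    (Hg : P (pullback.snd g (pullback.fst f h))) : P (pullback.snd (g ≫ f) h) := by
  rw [← pullbackRightPullbackFstIso_inv_snd_snd f h g, P.cancel_left_of_respectsIso]
  exact P.comp_mem _ _ Hg Hf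

end Pullbacks

section GenericFibre

variable {k : Type u} [Field k] {v : Valuation k ℝ≥0} {X Y Z T : Scheme.{u}}

lemma exists_comp_genFibTo_iff (sX : X ⟶ BaseS v) (t : T ⟶ X) :
    (∃ γ, γ ≫ genFibTo v sX = t) ↔ ∃ e, t ≫ sX = e ≫ genPtTo v := by
  constructor
  · rintro ⟨γ, rfl⟩
    exact ⟨γ ≫ pullback.snd _ _, by simp [pullback.condition]⟩
  · rintro ⟨e, he⟩
    exact ⟨pullback.lift t e he, pullback.lift_fst _ _ _⟩

variable (v) in
def IsEta (P : MorphismProperty Scheme.{u}) (sX : X ⟶ BaseS v) (f : Y ⟶ X) : Prop :=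
  P (pullback.snd f (genFibTo v sX))

namespace IsEta

variable {P : MorphismProperty Scheme.{u}} [P.IsStableUnderBaseChange] {sX : X ⟶ BaseS v}

lemma pullback_snd_of_comp_eq {f : Y ⟶ X} (hf : IsEta v P sX f) {t : T ⟶ X}
    {e : T ⟶ Spec (CommRingCat.of k)} (he : t ≫ sX = e ≫ genPtTo v) :
    P (pullback.snd f t) := by
  obtain ⟨γ, rfl⟩ := (exists_comp_genFibTo_iff sX t).2 ⟨e, he⟩
  exact pullback_snd_comp_right P hf γ

lemma comp [P.IsMultiplicative] {f : Y ⟶ X} {g : Z ⟶ Y} (hf : IsEta v P sX f)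
    (hg : IsEta v P (f ≫ sX) g) : IsEta v P sX (g ≫ f) :=
  pullback_snd_comp_left P hf <|
    hg.pullback_snd_of_comp_eq (e := pullback.snd f _ ≫ pullback.snd _ _)
    (by simp [pullback.condition_assoc, pullback.condition])

lemma pullbackSnd {f : Y ⟶ X} (hf : IsEta v P sX f) (w : T ⟶ X) :
    IsEta v P (w ≫ sX) (pullback.snd f w) :=
  pullback_snd_pullback_snd P <| hf.pullback_snd_of_comp_eq (e := pullback.snd _ _)
    (by simp [pullback.condition])

end IsEta

lemma isAdmVal_iff (sX : X ⟶ BaseS v) {R : Type u} [CommRing R] [IsDomain R] [ValuationRing R]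
    (α : Spec (CommRingCat.of R) ⟶ X) :
    IsAdmVal v sX α ↔
      ∃ e, (Spec.map (CommRingCat.ofHom (algebraMap R (FractionRing R))) ≫ α) ≫ sX =
        e ≫ genPtTo v :=
  exists_comp_genFibTo_iff sX _

lemma isAdmVal_comp_iff (sX : X ⟶ BaseS v) (φ : Y ⟶ X) {R : Type u} [CommRing R] [IsDomain R]
    [ValuationRing R] (α : Spec (CommRingCat.of R) ⟶ Y) :
    IsAdmVal v (φ ≫ sX) α ↔ IsAdmVal v sX (α ≫ φ) := by
  simp only [isAdmVal_iff, Category.assoc]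

end GenericFibre

lemma UniversallyClosed.exists_lift {X Y : Scheme.{u}} (c : X ⟶ Y) [UniversallyClosed c]
    {R : Type u} [CommRing R] [IsDomain R] [ValuationRing R] (α : Spec (CommRingCat.of R) ⟶ Y)
    (t : Spec (CommRingCat.of (FractionRing R)) ⟶ X)
    (h : t ≫ c = Spec.map (CommRingCat.ofHom (algebraMap R (FractionRing R))) ≫ α) :
    ∃ l, l ≫ c = α := by
  have hc : ValuativeCriterion.Existence c :=
    (UniversallyClosed.eq_valuativeCriterion ▸ ‹UniversallyClosed c›).1
  obtain ⟨⟨l, -, hl⟩⟩ := (hc ⟨R, FractionRing R, t, α, ⟨h⟩⟩).exists_lift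
  exact ⟨l, hl⟩

section TauCoverings

variable {k : Type u} [Field k] {v : Valuation k ℝ≥0} {X Y Z W : Scheme.{u}}

lemma IsAdmVal.exists_lift_of_isEtaIso {sX : X ⟶ BaseS v} (c : Z ⟶ X) [UniversallyClosed c]
    (hc : IsEtaIso v sX c) {R : Type u} [CommRing R] [IsDomain R] [ValuationRing R]
    {α : Spec (CommRingCat.of R) ⟶ X} (hα : IsAdmVal v sX α) : ∃ l, l ≫ c = α := by
  obtain ⟨γ, hγ⟩ := hα
  have : IsIso (pullback.snd c (genFibTo v sX)) := hc
  refine UniversallyClosed.exists_lift c α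
    (γ ≫ inv (pullback.snd c (genFibTo v sX)) ≫ pullback.fst c (genFibTo v sX)) ?_
  simp [pullback.condition, hγ]

namespace IsTauCovering

lemma comp {sX : X ⟶ BaseS v} {sY : Y ⟶ BaseS v} {sZ : Z ⟶ BaseS v}
    {f : Y ⟶ X} {g : Z ⟶ Y}
    (hf : IsTauCovering v sX sY f) (hg : IsTauCovering v sY sZ g) :
    IsTauCovering v sX sZ (g ≫ f) := by
  obtain rfl := hf.over'
  refine ⟨by rw [Category.assoc, hg.over'],
    IsEta.comp (P := @Etale) hf.etaEtale hg.etaEtale, ?_⟩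
  intro R _ _ _ hR α hα
  obtain ⟨β, rfl, hβ⟩ := hf.lifts R hR α hα
  obtain ⟨γ, rfl, hγ⟩ := hg.lifts R hR β hβ
  exact ⟨γ, (Category.assoc _ _ _).symm, hγ⟩

lemma pullbackSnd {sX : X ⟶ BaseS v} {sY : Y ⟶ BaseS v} {f : Y ⟶ X}
    (hf : IsTauCovering v sX sY f) (w : W ⟶ X) :
    IsTauCovering v (w ≫ sX) (pullback.snd f w ≫ w ≫ sX) (pullback.snd f w) := by
  refine ⟨rfl, IsEta.pullbackSnd (P := @Etale) hf.etaEtale w, ?_⟩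
  intro R _ _ _ hR α hα
  obtain ⟨β, hβ, -⟩ := hf.lifts R hR (α ≫ w) ((isAdmVal_comp_iff sX w α).1 hα)
  refine ⟨pullback.lift β α hβ, pullback.lift_snd _ _ _, ?_⟩
  rwa [isAdmVal_comp_iff, pullback.lift_snd]

lemma of_isEtaIso {sX : X ⟶ BaseS v} (c : Z ⟶ X) [UniversallyClosed c] (hc : IsEtaIso v sX c) :
    IsTauCovering v sX (c ≫ sX) c := by
  have : IsIso (pullback.snd c (genFibTo v sX)) := hc
  refine ⟨rfl, (inferInstance : Etale (pullback.snd c (genFibTo v sX))), ?_⟩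
  intro R _ _ _ _ α hα
  obtain ⟨l, rfl⟩ := hα.exists_lift_of_isEtaIso c hc
  exact ⟨l, rfl, (isAdmVal_comp_iff sX c l).2 hα⟩

end IsTauCovering

end TauCoverings

theorem tauCoverings_stable_under_composition_and_strict_base_change_general
    {k : Type u} [Field k] (v : Valuation k ℝ≥0) :
    -- stability under composition
    (∀ {X Y Z : Scheme.{u}} (sX : X ⟶ BaseS v) (sY : Y ⟶ BaseS v)
        (sZ : Z ⟶ BaseS v),
      AdmissibleOver v sX → AdmissibleOver v sY → AdmissibleOver v sZ →
      ∀ (f : Y ⟶ X) (g : Z ⟶ Y),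
        IsTauCovering v sX sY f → IsTauCovering v sY sZ g →
        IsTauCovering v sX sZ (g ≫ f)) ∧
    -- stability under strict base change
    (∀ {X Y W Z : Scheme.{u}} (sX : X ⟶ BaseS v) (sY : Y ⟶ BaseS v),
      AdmissibleOver v sX → AdmissibleOver v sY →
      ∀ (f : Y ⟶ X), IsTauCovering v sX sY f →
      ∀ (w : W ⟶ X), AdmissibleOver v (w ≫ sX) →
      ∀ (c : Z ⟶ pullback f w), IsClosedImmersion c →
        -- Z is the strict transform: flat over S and an η-isomorphism onto Y ×_X W
        SchemeFlat (c ≫ pullback.snd f w ≫ w ≫ sX) →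
        IsEtaIso v (pullback.snd f w ≫ w ≫ sX) c →
        IsTauCovering v (w ≫ sX) (c ≫ pullback.snd f w ≫ w ≫ sX)
          (c ≫ pullback.snd f w)) := by
  refine ⟨fun _ _ _ _ _ _ _ _ hf hg ↦ hf.comp hg, ?_⟩
  intro _ _ _ _ _ _ _ _ _ hf w _ c _ _ hc
  exact (hf.pullbackSnd w).comp (IsTauCovering.of_isEtaIso c hc)

theorem tauCoverings_stable_under_composition_and_strict_base_change
    {k : Type u} [Field k] (v : Valuation k ℝ≥0)
    (hv : ∃ y : k, v y ≠ 0 ∧ v y ≠ 1) :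
    -- stability under composition
    (∀ {X Y Z : Scheme.{u}} (sX : X ⟶ BaseS v) (sY : Y ⟶ BaseS v)
        (sZ : Z ⟶ BaseS v),
      AdmissibleOver v sX → AdmissibleOver v sY → AdmissibleOver v sZ →
      ∀ (f : Y ⟶ X) (g : Z ⟶ Y),
        IsTauCovering v sX sY f → IsTauCovering v sY sZ g →
        IsTauCovering v sX sZ (g ≫ f)) ∧
    -- stability under strict base change
    (∀ {X Y W Z : Scheme.{u}} (sX : X ⟶ BaseS v) (sY : Y ⟶ BaseS v),
      AdmissibleOver v sX → AdmissibleOver v sY →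
      ∀ (f : Y ⟶ X), IsTauCovering v sX sY f →
      ∀ (w : W ⟶ X), AdmissibleOver v (w ≫ sX) →
      ∀ (c : Z ⟶ pullback f w), IsClosedImmersion c →
        -- Z is the strict transform: flat over S and an η-isomorphism onto Y ×_X W
        SchemeFlat (c ≫ pullback.snd f w ≫ w ≫ sX) →
        IsEtaIso v (pullback.snd f w ≫ w ≫ sX) c →
        IsTauCovering v (w ≫ sX) (c ≫ pullback.snd f w ≫ w ≫ sX)
          (c ≫ pullback.snd f w)) :=
  tauCoverings_stable_under_composition_and_strict_base_change_general v

end Altered
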